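/- Let s ∈ (0,1) be irrational and suppose ⌊1/s⌋ is even (i.e. the first partial quotient a₁ in the continued fraction expansion s = [0; a₁, a₂, a₃, …] is even). Then s < 1/2, R(s) < 1/2, and R(R(s)) = γ(γ(s)). -/

import Mathlib

/-- The renormalization map `R : (0,1) → [0,1)`: `R(x) = 1 − x` if `x ≥ 1/2`, and
`R(x) = 1/(2x) − ⌊1/(2x)⌋` if `x < 1/2`. -/
noncomputable def Rmap (x : ℝ) : ℝ :=
  if x < 1/2 then 1 / (2 * x) - ⌊1 / (2 * x)⌋ else 1 - x

/-- The Gauss map `γ(x) = 1/x − ⌊1/x⌋`. -/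
noncomputable def gaussMap (x : ℝ) : ℝ := 1 / x - ⌊1 / x⌋

/-!
Below `1/2` the map `R` is `x ↦ γ(2x)`, i.e. the fractional part of `(1/x)/2`. When `⌊1/x⌋` is
even, halving commutes with taking fractional parts, so `R(s) = γ(s)/2 < 1/2`, and then
`R(R(s)) = γ(2 · γ(s)/2) = γ(γ(s))`. Evenness of `⌊1/s⌋` rules out `s > 1/2` (where the
floor is `1`), and irrationality rules out `s = 1/2`.
-/

theorem Int.fract_div_two_of_even_floor {k : Type*} [Field k] [LinearOrder k]
    [IsStrictOrderedRing k] [FloorRing k] {a : k} (h : Even ⌊a⌋) :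
    Int.fract (a / 2) = Int.fract a / 2 := by
  obtain ⟨m, hm⟩ := h
  have hfloor : ⌊a / 2⌋ = m := by
    simpa [hm, ← two_mul] using Int.floor_div_natCast a 2
  rw [Int.fract, Int.fract, hfloor, hm]
  push_cast
  ring

theorem gaussMap_eq_fract (x : ℝ) : gaussMap x = Int.fract (1 / x) := rfl

theorem gaussMap_lt_one (x : ℝ) : gaussMap x < 1 := by
  rw [gaussMap_eq_fract]
  exact Int.fract_lt_one _

theorem Rmap_of_lt_half {x : ℝ} (hx : x < 1 / 2) : Rmap x = gaussMap (2 * x) :=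
  if_pos hx

theorem Rmap_div_two {y : ℝ} (hy : y < 1) : Rmap (y / 2) = gaussMap y := by
  rw [Rmap_of_lt_half (by linarith), mul_div_cancel₀ y two_ne_zero]

theorem Rmap_eq_gaussMap_div_two {x : ℝ} (hx : x < 1 / 2) (h : Even ⌊1 / x⌋) :
    Rmap x = gaussMap x / 2 := by
  rw [Rmap_of_lt_half hx, gaussMap_eq_fract, gaussMap_eq_fract,
    ← Int.fract_div_two_of_even_floor h, div_div, mul_comm x]

theorem le_half_of_even_floor_one_div {x : ℝ} (hx : x < 1) (h : Even ⌊1 / x⌋) :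
    x ≤ 1 / 2 := by
  by_contra! hlt
  have hfloor : ⌊1 / x⌋ = 1 := by
    rw [Int.floor_eq_iff]
    constructor
    · rw [le_div_iff₀ (by linarith)]; push_cast; linarith
    · rw [div_lt_iff₀ (by linarith)]; push_cast; linarith
  rw [hfloor] at h
  exact Int.not_even_one h

/-- Let `s ∈ (0,1)` be irrational with `⌊1/s⌋` even (the first partial
quotient of the continued fraction of `s` is even).  Then `s < 1/2`, `R(s) < 1/2`, and
`R(R(s)) = γ(γ(s))`. -/
theorem R_squared_eq_gauss_squared (s : ℝ) (hs : s ∈ Set.Ioo (0 : ℝ) 1)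
    (hirr : Irrational s) (heven : Even ⌊1 / s⌋) :
    s < 1/2 ∧ Rmap s < 1/2 ∧ Rmap (Rmap s) = gaussMap (gaussMap s) := by
  have hs_ne : s ≠ 1 / 2 := by simpa using hirr.ne_rational 1 2
  have hs_half : s < 1 / 2 := (le_half_of_even_floor_one_div hs.2 heven).lt_of_ne hs_ne
  have hR : Rmap s = gaussMap s / 2 := Rmap_eq_gaussMap_div_two hs_half heven
  have hg : gaussMap s < 1 := gaussMap_lt_one s
  refine ⟨hs_half, by linarith, ?_⟩
  rw [hR, Rmap_div_two hg]
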